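/- Let T be nonexpansive with v = x_⋆ − T x_⋆ the infimal displacement vector, and let x^k be the Halpern iteration with λ_k = 1/(k+1). Then (‖x^k − T x^k‖ − ‖v‖)² ≤ (16/k²) ‖x^0 − x_⋆‖² for all k ≥ 1. -/

import Mathlib

def Nonexpansive {H : Type*} [NormedAddCommGroup H] (T : H → H) : Prop :=
  ∀ x y, ‖T x - T y‖ ≤ ‖x - y‖

/-!
Write `F = I - T`. Nonexpansiveness makes `F` monotone and `1/2`-cocoercive. Monotonicity and a
resolvent argument (solve `ξ - T ξ + ε (ξ - ȳ) = w` and let `ε → 0`) show that `closure (range F)`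
is convex, so its minimal-norm element satisfies `‖v‖² ≤ ⟪v, F z⟫` for every `z`. With this,
nonexpansiveness keeps `‖x k - x⋆ + (k/2) v‖ ≤ ‖x 0 - x⋆‖`, whence
`‖x 0 - x k‖ ≤ 2 ‖x 0 - x⋆‖ + (k/2) ‖v‖`. Cocoercivity makes the Lyapunov function
`k(k+1)/2 ‖F x k‖² + (k+1) ⟪F x k, x k - x 0⟫` nonincreasing from `0`, which gives
`(k/2) ‖F x k‖ ≤ ‖x 0 - x k‖`. Hence `‖v‖ ≤ ‖F x k‖ ≤ ‖v‖ + 4 ‖x 0 - x⋆‖ / k`.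
-/

open Set
open scoped InnerProductSpace

theorem convex_closure_of_forall_add_mem_closure {E : Type*} [AddCommGroup E] [Module ℝ E]
    [TopologicalSpace E] [IsTopologicalAddGroup E] [ContinuousSMul ℝ E] {s : Set E}
    (h : ∀ a ∈ s, ∀ b ∈ s, ∀ p q : ℝ, 0 ≤ p → 0 ≤ q → p + q = 1 → p • a + q • b ∈ closure s) :
    Convex ℝ (closure s) := by
  intro a ha b hb p q hp hq hpq
  simpa using map_mem_closure₂ (f := fun a b => p • a + q • b) (by fun_prop) ha hb
    fun a ha b hb => h a ha b hb p q hp hq hpq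

theorem real_inner_weighted_sub_eq {H : Type*} [NormedAddCommGroup H] [InnerProductSpace ℝ H]
    {p q : ℝ} (hpq : p + q = 1) (a a₁ a₂ b b₁ b₂ : H) :
    p * ⟪a - a₁, b - b₁⟫_ℝ + q * ⟪a - a₂, b - b₂⟫_ℝ =
      ⟪a - (p • a₁ + q • a₂), b - (p • b₁ + q • b₂)⟫_ℝ + p * q * ⟪a₁ - a₂, b₁ - b₂⟫_ℝ := by
  obtain rfl : q = 1 - p := by linarith
  simp only [inner_sub_left, inner_sub_right, inner_add_left, inner_add_right,
    real_inner_smul_left, real_inner_smul_right]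
  ring

theorem norm_sq_le_real_inner_of_forall_norm_le {H : Type*} [NormedAddCommGroup H]
    [InnerProductSpace ℝ H] {K : Set H} (hK : Convex ℝ K) {v : H} (hv : v ∈ K)
    (hmin : ∀ w ∈ K, ‖v‖ ≤ ‖w‖) {w : H} (hw : w ∈ K) : ‖v‖ ^ 2 ≤ ⟪v, w⟫_ℝ := by
  have : Nonempty K := ⟨⟨v, hv⟩⟩
  have hinf : ‖(0 : H) - v‖ = ⨅ w : K, ‖(0 : H) - w‖ := by
    simp only [zero_sub, norm_neg]
    exact le_antisymm (le_ciInf fun w => hmin w w.2)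
      (ciInf_le ⟨0, forall_mem_range.2 fun w : K => norm_nonneg (w : H)⟩ ⟨v, hv⟩)
  have := (norm_eq_iInf_iff_real_inner_le_zero hK hv).1 hinf w hw
  rw [zero_sub, inner_neg_left, inner_sub_right, real_inner_self_eq_norm_sq] at this
  linarith

theorem norm_add_smul_le_norm_add_smul {H : Type*} [NormedAddCommGroup H]
    [InnerProductSpace ℝ H] {a b v : H} {s : ℝ} (hs : 0 ≤ s) (hab : ‖b‖ ≤ ‖a‖)
    (hv : ⟪b - a, v⟫_ℝ ≤ 0) : ‖b + s • v‖ ≤ ‖a + s • v‖ := by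
  rw [← pow_le_pow_iff_left₀ (norm_nonneg _) (norm_nonneg _) two_ne_zero, norm_add_sq_real,
    norm_add_sq_real, real_inner_smul_right, real_inner_smul_right]
  rw [inner_sub_left] at hv
  nlinarith [pow_le_pow_left₀ (norm_nonneg b) hab 2]

namespace Nonexpansive

variable {H : Type*} [NormedAddCommGroup H] [InnerProductSpace ℝ H] {T : H → H}

theorem norm_sub_sq_le_two_mul_inner (hT : Nonexpansive T) (a b : H) :
    ‖(a - T a) - (b - T b)‖ ^ 2 ≤ 2 * ⟪(a - T a) - (b - T b), a - b⟫_ℝ := by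
  have hab : (a - T a) - (b - T b) = (a - b) - (T a - T b) := by abel
  have hT' := hT a b
  rw [hab, inner_sub_left, real_inner_self_eq_norm_sq, norm_sub_sq_real, real_inner_comm]
  nlinarith [norm_nonneg (T a - T b)]

theorem inner_sub_nonneg (hT : Nonexpansive T) (a b : H) :
    0 ≤ ⟪(a - T a) - (b - T b), a - b⟫_ℝ := by
  nlinarith [hT.norm_sub_sq_le_two_mul_inner a b, sq_nonneg ‖(a - T a) - (b - T b)‖]

theorem exists_sub_add_smul_sub_eq [CompleteSpace H] (hT : Nonexpansive T) {ε : ℝ} (hε : 0 < ε)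
    (y w : H) : ∃ ξ, (ξ - T ξ) + ε • (ξ - y) = w := by
  set c : ℝ := 1 / (1 + ε)
  have hc : 0 ≤ c := by positivity
  have hc1 : c < 1 := by rw [div_lt_one (by linarith)]; linarith
  have hf : ContractingWith ⟨c, hc⟩ fun ξ => c • (T ξ + (w + ε • y)) := by
    refine ⟨by exact_mod_cast hc1, LipschitzWith.of_dist_le_mul fun a b => ?_⟩
    rw [dist_eq_norm, ← smul_sub, add_sub_add_right_eq_sub, norm_smul, Real.norm_eq_abs,
      abs_of_nonneg hc]
    exact mul_le_mul_of_nonneg_left ((hT a b).trans_eq (dist_eq_norm a b).symm) hc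
  have : Nonempty H := ⟨0⟩
  refine ⟨ContractingWith.fixedPoint _ hf, ?_⟩
  set ξ := ContractingWith.fixedPoint _ hf
  have hξ : c • (T ξ + (w + ε • y)) = ξ := hf.fixedPoint_isFixedPt
  have hξ' : (1 + ε) • ξ = T ξ + (w + ε • y) := by
    nth_rewrite 1 [← hξ]
    rw [smul_smul, mul_one_div_cancel (by linarith), one_smul]
  linear_combination (norm := module) hξ'

theorem mul_norm_sub_sq_le_of_sub_add_smul_sub_eq (hT : Nonexpansive T) {ε p q : ℝ}
    (hp : 0 ≤ p) (hq : 0 ≤ q) (hpq : p + q = 1) {y₁ y₂ ξ : H}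
    (hξ : (ξ - T ξ) + ε • (ξ - (p • y₁ + q • y₂)) = p • (y₁ - T y₁) + q • (y₂ - T y₂)) :
    ε * ‖ξ - (p • y₁ + q • y₂)‖ ^ 2 ≤ p * q * ⟪(y₁ - T y₁) - (y₂ - T y₂), y₁ - y₂⟫_ℝ := by
  have hid := real_inner_weighted_sub_eq hpq (ξ - T ξ) (y₁ - T y₁) (y₂ - T y₂) ξ y₁ y₂
  rw [← hξ, sub_add_cancel_left, inner_neg_left, real_inner_smul_left,
    real_inner_self_eq_norm_sq] at hid
  nlinarith [mul_nonneg hp (hT.inner_sub_nonneg ξ y₁), mul_nonneg hq (hT.inner_sub_nonneg ξ y₂)]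

theorem add_mem_closure_range [CompleteSpace H] (hT : Nonexpansive T) (y₁ y₂ : H) {p q : ℝ}
    (hp : 0 ≤ p) (hq : 0 ≤ q) (hpq : p + q = 1) :
    p • (y₁ - T y₁) + q • (y₂ - T y₂) ∈ closure (range fun z => z - T z) := by
  set C := p * q * ⟪(y₁ - T y₁) - (y₂ - T y₂), y₁ - y₂⟫_ℝ
  have hC : 0 ≤ C := mul_nonneg (mul_nonneg hp hq) (hT.inner_sub_nonneg y₁ y₂)
  rw [Metric.mem_closure_iff]
  intro δ hδ
  -- for this `ε` the error `‖ε • (ξ - ȳ)‖² ≤ ε C` of the regularised solution is below `δ²`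
  have hε : 0 < δ ^ 2 / (C + 1) := by positivity
  obtain ⟨ξ, hξ⟩ := hT.exists_sub_add_smul_sub_eq hε (p • y₁ + q • y₂)
    (p • (y₁ - T y₁) + q • (y₂ - T y₂))
  refine ⟨ξ - T ξ, ⟨ξ, rfl⟩, ?_⟩
  have hest := hT.mul_norm_sub_sq_le_of_sub_add_smul_sub_eq hp hq hpq hξ
  rw [dist_eq_norm, ← hξ, add_sub_cancel_left, norm_smul, Real.norm_eq_abs,
    abs_of_pos hε]
  refine lt_of_pow_lt_pow_left₀ 2 hδ.le ?_
  calc (δ ^ 2 / (C + 1) * ‖ξ - (p • y₁ + q • y₂)‖) ^ 2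
      = δ ^ 2 / (C + 1) * (δ ^ 2 / (C + 1) * ‖ξ - (p • y₁ + q • y₂)‖ ^ 2) := by ring
    _ ≤ δ ^ 2 / (C + 1) * C := mul_le_mul_of_nonneg_left hest hε.le
    _ < δ ^ 2 := by
      rw [div_mul_eq_mul_div, div_lt_iff₀ (by positivity)]
      nlinarith [pow_pos hδ 2]

theorem convex_closure_range [CompleteSpace H] (hT : Nonexpansive T) :
    Convex ℝ (closure (range fun z => z - T z)) :=
  convex_closure_of_forall_add_mem_closure <| by
    rintro _ ⟨y₁, rfl⟩ _ ⟨y₂, rfl⟩ p q hp hq hpq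
    exact hT.add_mem_closure_range y₁ y₂ hp hq hpq

theorem norm_sq_le_inner_sub [CompleteSpace H] (hT : Nonexpansive T) {v : H}
    (hv : v ∈ closure (range fun z => z - T z))
    (hvmin : ∀ w ∈ closure (range fun z => z - T z), ‖v‖ ≤ ‖w‖) (z : H) :
    ‖v‖ ^ 2 ≤ ⟪v, z - T z⟫_ℝ :=
  norm_sq_le_real_inner_of_forall_norm_le hT.convex_closure_range hv hvmin
    (subset_closure ⟨z, rfl⟩)

end Nonexpansive

section Halpern

variable {H : Type*} [NormedAddCommGroup H] [InnerProductSpace ℝ H] {T : H → H} {x : ℕ → H}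

def IsHalpernIteration (T : H → H) (x : ℕ → H) : Prop :=
  ∀ k : ℕ, x (k + 1) = (1 / ((k : ℝ) + 2)) • x 0 + (((k : ℝ) + 1) / ((k : ℝ) + 2)) • T (x k)

noncomputable def halpernPotential (T : H → H) (x : ℕ → H) (k : ℕ) : ℝ :=
  k * (k + 1) / 2 * ‖x k - T (x k)‖ ^ 2 + (k + 1) * ⟪x k - T (x k), x k - x 0⟫_ℝ

namespace IsHalpernIteration

theorem smul_succ_sub_zero (hx : IsHalpernIteration T x) (k : ℕ) :
    ((k : ℝ) + 2) • (x (k + 1) - x 0) = ((k : ℝ) + 1) • ((x k - x 0) - (x k - T (x k))) := by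
  rw [hx k]
  match_scalars <;> field_simp <;> ring

theorem smul_succ_sub_self (hx : IsHalpernIteration T x) (k : ℕ) :
    ((k : ℝ) + 2) • (x (k + 1) - x k) = -((x k - x 0) + ((k : ℝ) + 1) • (x k - T (x k))) := by
  rw [hx k]
  match_scalars <;> field_simp; ring

theorem halpernPotential_succ_le (hT : Nonexpansive T) (hx : IsHalpernIteration T x) (k : ℕ) :
    halpernPotential T x (k + 1) ≤ halpernPotential T x k := by
  have hcoco := hT.norm_sub_sq_le_two_mul_inner (x (k + 1)) (x k)
  have h₀ := hx.smul_succ_sub_zero k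
  have h₁ := hx.smul_succ_sub_self k
  unfold halpernPotential
  push_cast
  set g := x k - T (x k)
  set g' := x (k + 1) - T (x (k + 1))
  set U := x k - x 0
  have e₀ : ((k : ℝ) + 2) * ⟪g', x (k + 1) - x 0⟫_ℝ =
      ((k : ℝ) + 1) * (⟪g', U⟫_ℝ - ⟪g', g⟫_ℝ) := by
    rw [← real_inner_smul_right, h₀, real_inner_smul_right, inner_sub_right]
  have e₁ : ((k : ℝ) + 2) * ⟪g' - g, x (k + 1) - x k⟫_ℝ =
      -(⟪g', U⟫_ℝ - ⟪g, U⟫_ℝ) - ((k : ℝ) + 1) * (⟪g', g⟫_ℝ - ‖g‖ ^ 2) := by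
    rw [← real_inner_smul_right, h₁, inner_neg_right, inner_add_right, real_inner_smul_right,
      inner_sub_left g' g U, inner_sub_left g' g g, real_inner_self_eq_norm_sq]
    ring
  rw [norm_sub_sq_real] at hcoco
  linear_combination ((k : ℝ) + 1) * ((k : ℝ) + 2) / 2 * hcoco + e₀ + ((k : ℝ) + 1) * e₁

theorem halpernPotential_nonpos (hT : Nonexpansive T) (hx : IsHalpernIteration T x) (k : ℕ) :
    halpernPotential T x k ≤ 0 := by
  simpa [halpernPotential] using
    antitone_nat_of_succ_le (hx.halpernPotential_succ_le hT) (Nat.zero_le k)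

theorem half_mul_norm_sub_le (hT : Nonexpansive T) (hx : IsHalpernIteration T x) (k : ℕ) :
    (k / 2 : ℝ) * ‖x k - T (x k)‖ ≤ ‖x 0 - x k‖ := by
  have hpot := hx.halpernPotential_nonpos hT k
  have hcs := real_inner_le_norm (x k - T (x k)) (x 0 - x k)
  rw [halpernPotential, ← neg_sub (x 0), inner_neg_right] at hpot
  have hprod : ‖x k - T (x k)‖ * ((k / 2 : ℝ) * ‖x k - T (x k)‖ - ‖x 0 - x k‖) ≤ 0 := by
    nlinarith [norm_nonneg (x k - T (x k))]
  rcases (norm_nonneg (x k - T (x k))).eq_or_lt with h | h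
  · rw [← h, mul_zero]
    exact norm_nonneg _
  · nlinarith

theorem norm_sub_add_smul_le (hT : Nonexpansive T) (hx : IsHalpernIteration T x) {v xs : H}
    (hxs : xs - T xs = v) (hv : ∀ z, ‖v‖ ^ 2 ≤ ⟪v, z - T z⟫_ℝ) (k : ℕ) :
    ‖(x k - xs) + ((k : ℝ) / 2) • v‖ ≤ ‖x 0 - xs‖ := by
  induction k with
  | zero => simp
  | succ k ih =>
    have hTxs : T xs = xs - v := by rw [← hxs, sub_sub_cancel]
    have hstep :
        ‖(T (x k) - T xs) + ((k : ℝ) / 2) • v‖ ≤ ‖(x k - xs) + ((k : ℝ) / 2) • v‖ := by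
      refine norm_add_smul_le_norm_add_smul (by positivity) (hT _ _) ?_
      have hvec : (T (x k) - T xs) - (x k - xs) = v - (x k - T (x k)) := by rw [hTxs]; abel
      rw [hvec, inner_sub_left, real_inner_self_eq_norm_sq, real_inner_comm]
      linarith [hv (x k)]
    have hrec : (x (k + 1) - xs) + (((k + 1 : ℕ) : ℝ) / 2) • v =
        (1 / ((k : ℝ) + 2)) • (x 0 - xs) +
          (((k : ℝ) + 1) / ((k : ℝ) + 2)) • ((T (x k) - T xs) + ((k : ℝ) / 2) • v) := by
      rw [hx k, hTxs]
      push_cast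
      match_scalars <;> field_simp <;> ring
    have hball : (1 / ((k : ℝ) + 2)) • (x 0 - xs) +
        (((k : ℝ) + 1) / ((k : ℝ) + 2)) • ((T (x k) - T xs) + ((k : ℝ) / 2) • v) ∈
          Metric.closedBall 0 ‖x 0 - xs‖ :=
      convex_closedBall _ _ (mem_closedBall_zero_iff.2 le_rfl)
        (mem_closedBall_zero_iff.2 (hstep.trans ih)) (by positivity) (by positivity)
        (by field_simp; ring)
    rwa [← hrec, mem_closedBall_zero_iff] at hball

theorem norm_zero_sub_le (hT : Nonexpansive T) (hx : IsHalpernIteration T x) {v xs : H}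
    (hxs : xs - T xs = v) (hv : ∀ z, ‖v‖ ^ 2 ≤ ⟪v, z - T z⟫_ℝ) (k : ℕ) :
    ‖x 0 - x k‖ ≤ 2 * ‖x 0 - xs‖ + (k / 2 : ℝ) * ‖v‖ := by
  have hshift := hx.norm_sub_add_smul_le hT hxs hv k
  have hdecomp :
      x 0 - x k = (x 0 - xs) - ((x k - xs) + ((k : ℝ) / 2) • v) + ((k : ℝ) / 2) • v := by
    abel
  calc ‖x 0 - x k‖
      ≤ ‖x 0 - xs‖ + ‖(x k - xs) + ((k : ℝ) / 2) • v‖ + ‖((k : ℝ) / 2) • v‖ := by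
        rw [hdecomp]
        exact (norm_add_le _ _).trans (by gcongr; exact norm_sub_le _ _)
    _ ≤ 2 * ‖x 0 - xs‖ + (k / 2 : ℝ) * ‖v‖ := by
        rw [norm_smul, Real.norm_of_nonneg (by positivity)]
        linarith

end IsHalpernIteration

end Halpern

theorem ohm_residual_norm_rate_general
    {H : Type*} [NormedAddCommGroup H] [InnerProductSpace ℝ H] [CompleteSpace H]
    (T : H → H) (hT : Nonexpansive T) (v xs : H)
    (hvmin : ∀ w ∈ closure (Set.range fun z => z - T z), ‖v‖ ≤ ‖w‖)
    (hxs : xs - T xs = v)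
    (x : ℕ → H)
    (hx : ∀ k : ℕ, x (k + 1) =
      (1 / ((k : ℝ) + 2)) • x 0 + (((k : ℝ) + 1) / ((k : ℝ) + 2)) • T (x k)) :
    ∀ k : ℕ, 1 ≤ k →
      (‖x k - T (x k)‖ - ‖v‖) ^ 2 ≤ (16 / (k : ℝ) ^ 2) * ‖x 0 - xs‖ ^ 2 := by
  intro k hk
  have hhal : IsHalpernIteration T x := hx
  have hk' : (0 : ℝ) < k := by exact_mod_cast hk
  have hvip := hT.norm_sq_le_inner_sub (subset_closure ⟨xs, hxs⟩) hvmin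
  have hlower : ‖v‖ ≤ ‖x k - T (x k)‖ := hvmin _ (subset_closure ⟨x k, rfl⟩)
  have hresidual := hhal.half_mul_norm_sub_le hT k
  have hdist := hhal.norm_zero_sub_le hT hxs hvip k
  have hupper : ‖x k - T (x k)‖ - ‖v‖ ≤ 4 * ‖x 0 - xs‖ / k := by
    rw [le_div_iff₀ hk']
    linarith
  calc (‖x k - T (x k)‖ - ‖v‖) ^ 2 ≤ (4 * ‖x 0 - xs‖ / k) ^ 2 :=
        pow_le_pow_left₀ (sub_nonneg.2 hlower) hupper 2
    _ = 16 / (k : ℝ) ^ 2 * ‖x 0 - xs‖ ^ 2 := by ring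

/-- For the Halpern iteration with `λ_k = 1/(k+1)` (OHM), the norm of the fixed-point
residual converges to `‖v‖` at rate `16/k²`. -/
theorem ohm_residual_norm_rate
    {H : Type*} [NormedAddCommGroup H] [InnerProductSpace ℝ H] [CompleteSpace H]
    (T : H → H) (hT : Nonexpansive T) (v xs : H)
    (hv : v ∈ closure (Set.range fun z => z - T z))
    (hvmin : ∀ w ∈ closure (Set.range fun z => z - T z), ‖v‖ ≤ ‖w‖)
    (hxs : xs - T xs = v)
    (x : ℕ → H)
    (hx : ∀ k : ℕ, x (k + 1) =
      (1 / ((k : ℝ) + 2)) • x 0 + (((k : ℝ) + 1) / ((k : ℝ) + 2)) • T (x k)) :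
    ∀ k : ℕ, 1 ≤ k →
      (‖x k - T (x k)‖ - ‖v‖) ^ 2 ≤ (16 / (k : ℝ) ^ 2) * ‖x 0 - xs‖ ^ 2 :=
  ohm_residual_norm_rate_general T hT v xs hvmin hxs x hx
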